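/- Let a < b be real numbers and let S be the strip {z ∈ ℂ : a < Re z < b}. Suppose H : S × ℝⁿ → ℂ is such that z ↦ H(z,x) is analytic on S for each x, x ↦ H(z,x) is measurable for each z, and there is a measurable function H⋆ : ℝⁿ → [0,∞) with |H(z,x)| + |∂H/∂z (z,x)| ≤ H⋆(x) for all z in S and x in ℝⁿ. Let f : ℝⁿ → ℂ be a measurable function such that ∫_{ℝⁿ} max(|f(x)|^a, |f(x)|^b) (1 + |log |f(x)||) H⋆(x) dx < ∞ (interpreting the integrand as 0 where f(x) = 0). Then the function G(z) = ∫_{ℝⁿ} |f(x)|^z e^{i Arg f(x)} H(z,x) dx is analytic on the strip a < Re z < b. -/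

import Mathlib

/-!
Differentiation under the integral sign. On the strip, `z ↦ |w|^z e^{i Arg w}` has derivative
`log |w|` times itself, and `|w|^{Re z} ≤ max (|w|^a, |w|^b)`. Hence both the integrand
`|f|^z e^{i Arg f} H(z, ·)` and its `z`-derivative `|f|^z e^{i Arg f} (log |f| H + ∂H/∂z)` are
dominated, uniformly in `z`, by `max (|f|^a, |f|^b) (1 + |log |f||) H⋆`, which is integrable.
-/

open MeasureTheory Filter Topology

theorem measurable_deriv_of_differentiableAt {𝕜 α E : Type*} [RCLike 𝕜] [MeasurableSpace α]
    [NormedAddCommGroup E] [NormedSpace 𝕜 E] [MeasurableSpace E] [BorelSpace E]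
    [SecondCountableTopology E] {H : 𝕜 → α → E} {z : 𝕜}
    (hmeas : ∀ w, Measurable (H w)) (hdiff : ∀ x, DifferentiableAt 𝕜 (H · x) z) :
    Measurable fun x => deriv (H · x) z := by
  -- the derivative is the pointwise limit of the difference quotients with step `1 / (n + 1)`
  have hstep : Tendsto (fun n : ℕ => 1 / ((n : 𝕜) + 1)) atTop (𝓝[≠] 0) :=
    tendsto_nhdsWithin_iff.2 ⟨tendsto_one_div_add_atTop_nhds_zero_nat,
      .of_forall fun n => one_div_ne_zero (Nat.cast_add_one_ne_zero n)⟩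
  refine measurable_of_tendsto_metrizable (fun n => ?_)
    (tendsto_pi_nhds.2 fun x => (hdiff x).hasDerivAt.tendsto_slope_zero.comp hstep)
  exact ((hmeas _).sub (hmeas z)).const_smul _

lemma rpow_le_max_rpow {t a b c : ℝ} (ht : 0 < t) (hac : a ≤ c) (hcb : c ≤ b) :
    t ^ c ≤ max (t ^ a) (t ^ b) := by
  rcases le_total 1 t with h | h
  · exact le_max_of_le_right (Real.rpow_le_rpow_of_exponent_le h hcb)
  · exact le_max_of_le_left (Real.rpow_le_rpow_of_exponent_ge ht h hac)

/-- `|w|^z e^{i Arg w}`, with the value `0` at `w = 0`. -/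
noncomputable def polarPow (w z : ℂ) : ℂ :=
  if w = 0 then 0 else Complex.exp (z * Real.log ‖w‖ + Complex.I * Complex.arg w)

noncomputable def logWeight (a b : ℝ) (w : ℂ) : ℝ :=
  if w = 0 then 0 else max (‖w‖ ^ a) (‖w‖ ^ b) * (1 + |Real.log ‖w‖|)

lemma measurable_polarPow (z : ℂ) : Measurable fun w => polarPow w z :=
  Measurable.ite (measurableSet_singleton 0) measurable_const (by fun_prop)

lemma norm_polarPow_of_ne_zero {w : ℂ} (hw : w ≠ 0) (z : ℂ) :
    ‖polarPow w z‖ = ‖w‖ ^ z.re := by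
  rw [polarPow, if_neg hw, Complex.norm_exp, Real.rpow_def_of_pos (norm_pos_iff.2 hw)]
  simp [mul_comm]

lemma hasDerivAt_polarPow (w z : ℂ) :
    HasDerivAt (polarPow w) (Real.log ‖w‖ * polarPow w z) z := by
  unfold polarPow
  split_ifs
  · simpa using hasDerivAt_const z (0 : ℂ)
  · simpa [mul_comm] using (((hasDerivAt_id z).mul_const (Real.log ‖w‖ : ℂ)).add_const
      (Complex.I * Complex.arg w)).cexp

lemma hasDerivAt_polarPow_mul (w : ℂ) {h : ℂ → ℂ} {h' z : ℂ} (hh : HasDerivAt h h' z) :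
    HasDerivAt (fun v => polarPow w v * h v) (polarPow w z * (Real.log ‖w‖ * h z + h')) z :=
  ((hasDerivAt_polarPow w z).mul hh).congr_deriv (by ring)

section

variable {a b M : ℝ} {w z u v : ℂ}

lemma norm_polarPow_mul_le (ha : a ≤ z.re) (hb : z.re ≤ b)
    (hu : ‖u‖ ≤ (1 + |Real.log ‖w‖|) * M) :
    ‖polarPow w z * u‖ ≤ logWeight a b w * M := by
  by_cases hw : w = 0
  · simp [polarPow, logWeight, hw]
  rw [logWeight, if_neg hw, norm_mul, norm_polarPow_of_ne_zero hw, mul_assoc]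
  exact mul_le_mul (rpow_le_max_rpow (norm_pos_iff.2 hw) ha hb) hu (norm_nonneg u)
    ((Real.rpow_nonneg (norm_nonneg w) a).trans (le_max_left _ _))

lemma norm_polarPow_mul_le_of_norm_add_le (ha : a ≤ z.re) (hb : z.re ≤ b)
    (hM : ‖u‖ + ‖v‖ ≤ M) : ‖polarPow w z * u‖ ≤ logWeight a b w * M := by
  refine norm_polarPow_mul_le ha hb ?_
  nlinarith [mul_le_mul_of_nonneg_left hM (abs_nonneg (Real.log ‖w‖)),
    mul_nonneg (abs_nonneg (Real.log ‖w‖)) (norm_nonneg u),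
    mul_nonneg (abs_nonneg (Real.log ‖w‖)) (norm_nonneg v), norm_nonneg v]

lemma norm_polarPow_mul_log_mul_add_le (ha : a ≤ z.re) (hb : z.re ≤ b)
    (hM : ‖u‖ + ‖v‖ ≤ M) :
    ‖polarPow w z * (Real.log ‖w‖ * u + v)‖ ≤ logWeight a b w * M := by
  refine norm_polarPow_mul_le ha hb ((norm_add_le _ _).trans ?_)
  rw [norm_mul, Complex.norm_real, Real.norm_eq_abs]
  nlinarith [mul_le_mul_of_nonneg_left hM (abs_nonneg (Real.log ‖w‖)),
    mul_nonneg (abs_nonneg (Real.log ‖w‖)) (norm_nonneg v), norm_nonneg u]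

end

theorem analytic_integral_on_strip_general (n : ℕ) (a b : ℝ)
    (H : ℂ → EuclideanSpace ℝ (Fin n) → ℂ) (Hstar : EuclideanSpace ℝ (Fin n) → ℝ)
    (hHanalytic : ∀ x, DifferentiableOn ℂ (fun z => H z x) {z : ℂ | a < z.re ∧ z.re < b})
    (hHmeas : ∀ z : ℂ, Measurable (fun x => H z x))
    (hHbound : ∀ z : ℂ, a < z.re → z.re < b → ∀ x,
      ‖H z x‖ + ‖deriv (fun w => H w x) z‖ ≤ Hstar x)
    (f : EuclideanSpace ℝ (Fin n) → ℂ) (hf : Measurable f)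
    (hint : Integrable (fun x =>
      (if f x = 0 then 0 else
        max (‖f x‖ ^ a) (‖f x‖ ^ b) *
          (1 + |Real.log (‖f x‖)|)) * Hstar x) volume) :
    DifferentiableOn ℂ
      (fun z => ∫ x, (if f x = 0 then 0 else
        Complex.exp (z * Real.log (‖f x‖) +
          Complex.I * Complex.arg (f x))) * H z x)
      {z : ℂ | a < z.re ∧ z.re < b} := by
  change DifferentiableOn ℂ (fun z => ∫ x, polarPow (f x) z * H z x) _
  change Integrable (fun x => logWeight a b (f x) * Hstar x) volume at hint
  intro z₀ hz₀
  have hS : IsOpen {z : ℂ | a < z.re ∧ z.re < b} := isOpen_Ioo.preimage Complex.continuous_re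
  have hHderiv : ∀ x, ∀ z ∈ {z : ℂ | a < z.re ∧ z.re < b},
      HasDerivAt (H · x) (deriv (H · x) z) z := fun x z hz =>
    ((hHanalytic x).differentiableAt (hS.mem_nhds hz)).hasDerivAt
  have hFmeas : ∀ z, Measurable fun x => polarPow (f x) z * H z x := fun z =>
    ((measurable_polarPow z).comp hf).mul (hHmeas z)
  refine (hasDerivAt_integral_of_dominated_loc_of_deriv_le (hS.mem_nhds hz₀)
    (F' := fun z x => polarPow (f x) z * (Real.log ‖f x‖ * H z x + deriv (H · x) z))
    (.of_forall fun z => (hFmeas z).aestronglyMeasurable) ?_ ?_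
    (.of_forall fun x z hz => norm_polarPow_mul_log_mul_add_le hz.1.le hz.2.le
      (hHbound z hz.1 hz.2 x)) hint
    (.of_forall fun x z hz => hasDerivAt_polarPow_mul (f x) (hHderiv x z hz))
    ).2.differentiableAt.differentiableWithinAt
  · exact hint.mono' (hFmeas z₀).aestronglyMeasurable (.of_forall fun x =>
      norm_polarPow_mul_le_of_norm_add_le hz₀.1.le hz₀.2.le (hHbound z₀ hz₀.1 hz₀.2 x))
  · exact (((measurable_polarPow z₀).comp hf).mul
      (((Complex.measurable_ofReal.comp (Real.measurable_log.comp hf.norm)).mul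
        (hHmeas z₀)).add (measurable_deriv_of_differentiableAt hHmeas
          fun x => (hHderiv x z₀ hz₀).differentiableAt))).aestronglyMeasurable

/-- Analyticity of `G(z) = ∫ |f(x)|^z e^{i Arg f(x)} H(z,x) dx` on a vertical strip,
under a uniform domination of `H` and its `z`-derivative and a logarithmic
integrability condition on `f`. -/
theorem analytic_integral_on_strip (n : ℕ) (a b : ℝ) (hab : a < b)
    (H : ℂ → EuclideanSpace ℝ (Fin n) → ℂ) (Hstar : EuclideanSpace ℝ (Fin n) → ℝ)
    (hHstar_meas : Measurable Hstar) (hHstar_nonneg : ∀ x, 0 ≤ Hstar x)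
    (hHanalytic : ∀ x, DifferentiableOn ℂ (fun z => H z x) {z : ℂ | a < z.re ∧ z.re < b})
    (hHmeas : ∀ z : ℂ, Measurable (fun x => H z x))
    (hHbound : ∀ z : ℂ, a < z.re → z.re < b → ∀ x,
      ‖H z x‖ + ‖deriv (fun w => H w x) z‖ ≤ Hstar x)
    (f : EuclideanSpace ℝ (Fin n) → ℂ) (hf : Measurable f)
    (hint : Integrable (fun x =>
      (if f x = 0 then 0 else
        max (‖f x‖ ^ a) (‖f x‖ ^ b) *
          (1 + |Real.log (‖f x‖)|)) * Hstar x) volume) :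
    DifferentiableOn ℂ
      (fun z => ∫ x, (if f x = 0 then 0 else
        Complex.exp (z * Real.log (‖f x‖) +
          Complex.I * Complex.arg (f x))) * H z x)
      {z : ℂ | a < z.re ∧ z.re < b} :=
  analytic_integral_on_strip_general n a b H Hstar hHanalytic hHmeas hHbound f hf hint
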